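/- Suppose a_iK_i/(1+K_i) < d_i for both i = 1 and i = 2 (equivalently μ_i > K_i where μ_i = d_i/(a_i − d_i) when a_i > d_i). Then for every solution of Model (2) on [0, ∞) with x_1(0) > 0, x_2(0) > 0, y_1(0) ≥ 0, y_2(0) ≥ 0, both predators go extinct and the solution converges to (K_1, 0, K_2, 0): y_1(t) → 0, y_2(t) → 0, x_1(t) → K_1, x_2(t) → K_2 as t → ∞. -/

import Mathlib

/-!
The prey stay positive because `x' = x · h(t)` with `h` bounded below on compact time intervals,
and the predators stay nonnegative because their equations are linear and cooperative in
`(y₁, y₂)`. Since the per-capita prey growth is at most `r (1 - x / K)`, eventually `xᵢ ≤ cᵢ`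
for any `cᵢ > Kᵢ`; choosing `cᵢ` with `aᵢ cᵢ / (1 + cᵢ) < dᵢ` makes both predator growth rates
eventually `≤ -δ`, and then the weighted total `(ρ₂ + δ/2) y₁ + (ρ₁ + δ/2) y₂` decays
exponentially. Once the predators are gone, `log xᵢ` is pushed up towards `log Kᵢ` at a uniform
rate, so `xᵢ → Kᵢ`.
-/

open Filter Set Real Topology

section Comparison

variable {f f' : ℝ → ℝ} {a : ℝ}

theorem le_mul_exp_of_hasDerivAt_le_mul {K : ℝ} (hf : ∀ t, a ≤ t → HasDerivAt f (f' t) t)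
    (hbound : ∀ t, a ≤ t → f' t ≤ K * f t) (t : ℝ) (ht : a ≤ t) :
    f t ≤ f a * exp (K * (t - a)) := by
  have := le_gronwallBound_of_liminf_deriv_right_le (b := t) (ε := 0)
    (fun s hs => (hf s hs.1).continuousAt.continuousWithinAt)
    (fun s hs _ hr => (hf s hs.1).hasDerivWithinAt.liminf_right_slope_le hr) le_rfl
    (fun s hs => (add_zero (K * f s)).symm ▸ hbound s hs.1) t ⟨ht, le_rfl⟩
  rwa [gronwallBound_ε0] at this

theorem tendsto_zero_of_hasDerivAt_le_neg_mul {κ : ℝ} (hκ : 0 < κ)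
    (hf : ∀ t, a ≤ t → HasDerivAt f (f' t) t) (hbound : ∀ t, a ≤ t → f' t ≤ -κ * f t)
    (hnonneg : ∀ t, a ≤ t → 0 ≤ f t) : Tendsto f atTop (𝓝 0) := by
  have hexp : Tendsto (fun t => f a * exp (-κ * (t - a))) atTop (𝓝 0) := by
    have := (tendsto_atTop_add_const_right _ (-a) tendsto_id).const_mul_atTop_of_neg
      (neg_neg_of_pos hκ)
    simpa [sub_eq_add_neg] using (tendsto_exp_atBot.comp this).const_mul (f a)
  refine tendsto_of_tendsto_of_tendsto_of_le_of_le' tendsto_const_nhds hexp ?_ ?_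
  · filter_upwards [eventually_ge_atTop a] with t ht using hnonneg t ht
  · filter_upwards [eventually_ge_atTop a] with t ht
    exact le_mul_exp_of_hasDerivAt_le_mul hf hbound t ht

theorem eventually_le_of_hasDerivAt_le_neg {c η : ℝ} (hη : 0 < η)
    (hf : ∀ t, a ≤ t → HasDerivAt f (f' t) t) (hdrift : ∀ t, a ≤ t → c ≤ f t → f' t ≤ -η) :
    ∀ᶠ t in atTop, f t ≤ c := by
  by_cases hcross : ∃ s, a ≤ s ∧ f s ≤ c
  · obtain ⟨s, has, hs⟩ := hcross
    filter_upwards [eventually_ge_atTop s] with t hst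
    exact image_le_of_deriv_right_lt_deriv_boundary
      (fun u hu => (hf u (has.trans hu.1)).continuousAt.continuousWithinAt)
      (fun u hu => (hf u (has.trans hu.1)).hasDerivWithinAt) hs (fun _ => hasDerivAt_const _ c)
      (fun u hu hfu => (hdrift u (has.trans hu.1) hfu.ge).trans_lt (neg_neg_of_pos hη))
      ⟨hst, le_rfl⟩
  · push Not at hcross
    -- otherwise `f` decreases at rate `η` forever and reaches `c` by time `a + (f a - c) / η`
    exfalso
    set t := a + (f a - c) / η
    have hat : a ≤ t :=
      le_add_of_nonneg_right (div_nonneg (sub_nonneg.2 (hcross a le_rfl).le) hη.le)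
    have hlin : f t ≤ f a - η * (t - a) :=
      image_le_of_deriv_right_le_deriv_boundary (B := fun s => f a - η * (s - a))
        (B' := fun _ => -η) (fun u hu => (hf u hu.1).continuousAt.continuousWithinAt)
        (fun u hu => (hf u hu.1).hasDerivWithinAt) (by simp) (by fun_prop)
        (fun u _ => by
          simpa using
            ((((hasDerivAt_id u).sub_const a).const_mul η).const_sub (f a)).hasDerivWithinAt)
        (fun u hu => hdrift u hu.1 (hcross u hu.1).le) ⟨hat, le_rfl⟩
    have hcrossed : f a - η * (t - a) = c := by simp only [t]; field_simp; ring
    exact (hcross t hat).not_ge (hlin.trans hcrossed.le)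

theorem eventually_ge_of_pos_le_hasDerivAt {c η : ℝ} (hη : 0 < η)
    (hf : ∀ t, a ≤ t → HasDerivAt f (f' t) t) (hdrift : ∀ t, a ≤ t → f t ≤ c → η ≤ f' t) :
    ∀ᶠ t in atTop, c ≤ f t := by
  have := eventually_le_of_hasDerivAt_le_neg (f := -f) (f' := -f') (c := -c) hη
    (fun t ht => (hf t ht).neg) (fun t ht h => neg_le_neg (hdrift t ht (neg_le_neg_iff.1 h)))
  exact this.mono fun t ht => neg_le_neg_iff.1 ht

theorem pos_of_hasDerivAt_ge_neg_mul (hf : ∀ t, a ≤ t → HasDerivAt f (f' t) t) (hfa : 0 < f a)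
    (hbound : ∀ T, ∃ B, ∀ t ∈ Icc a T, 0 < f t → -(B * f t) ≤ f' t) (t : ℝ) (ht : a ≤ t) :
    0 < f t := by
  obtain ⟨B, hB⟩ := hbound t
  set φ := fun s => f a / 2 * exp (-(B + 1) * (s - a))
  have hφ : ∀ s, HasDerivAt φ (-(B + 1) * φ s) s := fun s => by
    have := (((hasDerivAt_id s).sub_const a).const_mul (-(B + 1))).exp.const_mul (f a / 2)
    exact this.congr_deriv (by simp only [φ, id]; ring)
  -- `φ` is a strict subsolution wherever it touches `f`
  have hfence : -f t ≤ -φ t :=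
    image_le_of_deriv_right_lt_deriv_boundary (f := -f) (f' := -f') (B := -φ)
      (B' := fun s => -(-(B + 1) * φ s))
      (fun u hu => (hf u hu.1).neg.continuousAt.continuousWithinAt)
      (fun u hu => (hf u hu.1).neg.hasDerivWithinAt)
      (by simp only [φ, Pi.neg_apply, sub_self, mul_zero, exp_zero, mul_one]; linarith)
      (fun s => (hφ s).neg)
      (fun u hu hu' => by
        have hfu : f u = φ u := neg_injective hu'
        have hφu : 0 < φ u := by positivity
        have := hB u ⟨hu.1, hu.2.le⟩ (hfu ▸ hφu)
        rw [hfu] at this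
        simp only [Pi.neg_apply]
        linarith)
      ⟨ht, le_rfl⟩
  have : 0 < φ t := by positivity
  linarith

end Comparison

theorem hasDerivAt_min_zero_sq (u : ℝ) : HasDerivAt (fun v => min v 0 ^ 2) (2 * min u 0) u := by
  rcases lt_trichotomy u 0 with hu | rfl | hu
  · have : (fun v => min v 0 ^ 2) =ᶠ[𝓝 u] fun v => v ^ 2 :=
      (eventually_lt_nhds hu).mono fun v hv => by simp [min_eq_left hv.le]
    simpa [min_eq_left hu.le] using (hasDerivAt_pow 2 u).congr_of_eventuallyEq this
  · rw [hasDerivAt_iff_isLittleO_nhds_zero]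
    simp only [zero_add, min_self, ne_eq, OfNat.ofNat_ne_zero, not_false_eq_true, zero_pow,
      sub_zero, mul_zero, smul_zero]
    refine (Asymptotics.IsBigO.of_bound 1 (Eventually.of_forall fun v => ?_)).trans_isLittleO
      (Asymptotics.isLittleO_pow_id one_lt_two)
    rcases le_total v 0 with hv | hv
    · simp [min_eq_left hv]
    · simp [min_eq_right hv, sq_nonneg]
  · have : (fun v => min v 0 ^ 2) =ᶠ[𝓝 u] fun _ => (0 : ℝ) :=
      (eventually_gt_nhds hu).mono fun v hv => by simp [min_eq_right hv.le]
    simpa [min_eq_right hu.le] using (hasDerivAt_const u (0 : ℝ)).congr_of_eventuallyEq this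

theorem two_min_zero_mul_le {c M ρ u w : ℝ} (hc : c ≤ M) (hρ : 0 ≤ ρ) :
    2 * min u 0 * (c * u + ρ * (w - u)) ≤
      2 * M * min u 0 ^ 2 + ρ * (min w 0 ^ 2 - min u 0 ^ 2) := by
  rcases le_total u 0 with hu | hu <;> rcases le_total w 0 with hw | hw
  · simp only [min_eq_left hu, min_eq_left hw]
    nlinarith [mul_le_mul_of_nonneg_right hc (sq_nonneg u), mul_nonneg hρ (sq_nonneg (u - w))]
  · simp only [min_eq_left hu, min_eq_right hw]
    nlinarith [mul_le_mul_of_nonneg_right hc (sq_nonneg u), mul_nonneg hρ (sq_nonneg u),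
      mul_nonneg (mul_nonneg hρ (neg_nonneg.2 hu)) hw]
  · simp only [min_eq_right hu, min_eq_left hw]
    nlinarith [mul_nonneg hρ (sq_nonneg w)]
  · simp only [min_eq_right hu, min_eq_right hw]
    simp

noncomputable def holling (a x : ℝ) : ℝ := a * x / (1 + x)

theorem holling_le {a x : ℝ} (ha : 0 ≤ a) (hx : 0 ≤ x) : holling a x ≤ a := by
  unfold holling
  rw [div_le_iff₀ (by positivity)]
  nlinarith

theorem holling_le_holling {a x c : ℝ} (ha : 0 ≤ a) (hx : 0 ≤ x) (hxc : x ≤ c) :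
    holling a x ≤ holling a c := by
  unfold holling
  rw [div_le_div_iff₀ (by positivity) (by linarith)]
  nlinarith [mul_le_mul_of_nonneg_left hxc ha]

theorem exists_gt_holling_lt {a K d : ℝ} (hK : 1 + K ≠ 0) (h : holling a K < d) :
    ∃ c, K < c ∧ holling a c < d := by
  have hcont : ContinuousAt (holling a) K :=
    (continuousAt_const.mul continuousAt_id).div (continuousAt_const.add continuousAt_id) hK
  obtain ⟨c, hc, hKc⟩ :=
    ((hcont.eventually (gt_mem_nhds h)).filter_mono nhdsWithin_le_nhds |>.and
      (self_mem_nhdsWithin : Ioi K ∈ 𝓝[>] K)).exists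
  exact ⟨c, hKc, hc⟩

def IsPreySolution (r a K : ℝ) (x y : ℝ → ℝ) : Prop :=
  ∀ t, 0 ≤ t → HasDerivAt x (r * x t * (1 - x t / K) - a * x t * y t / (1 + x t)) t

section Prey

variable {r a K : ℝ} {x y : ℝ → ℝ}

theorem hasDerivAt_log_prey {t : ℝ}
    (hx : HasDerivAt x (r * x t * (1 - x t / K) - a * x t * y t / (1 + x t)) t)
    (hxt : 0 < x t) :
    HasDerivAt (fun s => log (x s)) (r * (1 - x t / K) - a * y t / (1 + x t)) t := by
  convert hx.log hxt.ne' using 1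
  field_simp

theorem prey_pos (hr : 0 ≤ r) (ha : 0 ≤ a) (hK : 0 < K)
    (hx : IsPreySolution r a K x y) (hy : ∀ t, 0 ≤ t → ContinuousAt y t) (hx0 : 0 < x 0)
    (t : ℝ) (ht : 0 ≤ t) : 0 < x t := by
  refine pos_of_hasDerivAt_ge_neg_mul hx hx0 (fun T => ?_) t ht
  obtain ⟨X, hX⟩ := isCompact_Icc.exists_bound_of_continuousOn
    (fun s (hs : s ∈ Icc 0 T) => (hx s hs.1).continuousAt.continuousWithinAt)
  obtain ⟨Y, hY⟩ := isCompact_Icc.exists_bound_of_continuousOn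
    (fun s (hs : s ∈ Icc 0 T) => (hy s hs.1).continuousWithinAt)
  refine ⟨r * (X / K) + a * Y, fun s hs hxs => ?_⟩
  have hxX : x s ≤ X := (le_abs_self _).trans (hX s hs)
  have hyY : y s ≤ Y := (le_abs_self _).trans (hY s hs)
  have hY0 : 0 ≤ Y := (abs_nonneg _).trans (hY s hs)
  have hlogistic : -(r * (X / K)) ≤ r * (1 - x s / K) := by
    have : r * (x s / K) ≤ r * (X / K) := by gcongr
    nlinarith
  have hpred : a * y s / (1 + x s) ≤ a * Y := by
    rw [div_le_iff₀ (by linarith)]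
    nlinarith [mul_le_mul_of_nonneg_left hyY ha, mul_nonneg (mul_nonneg ha hY0) hxs.le]
  have hsplit : r * x s * (1 - x s / K) - a * x s * y s / (1 + x s) =
      x s * (r * (1 - x s / K) - a * y s / (1 + x s)) := by ring
  rw [hsplit]
  nlinarith

theorem prey_eventually_le (hr : 0 < r) (ha : 0 ≤ a) (hK : 0 < K)
    (hx : IsPreySolution r a K x y) (hxpos : ∀ t, 0 ≤ t → 0 < x t) (hy : ∀ t, 0 ≤ t → 0 ≤ y t)
    {c : ℝ} (hKc : K < c) :
    ∀ᶠ t in atTop, x t ≤ c := by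
  have hc : 0 < c := hK.trans hKc
  have hlog : ∀ᶠ t in atTop, log (x t) ≤ log c := by
    refine eventually_le_of_hasDerivAt_le_neg (a := 0) (η := r * (c / K - 1))
      (mul_pos hr (by rw [sub_pos, one_lt_div hK]; exact hKc))
      (fun t ht => hasDerivAt_log_prey (hx t ht) (hxpos t ht)) fun t ht hxt => ?_
    have hcx : c ≤ x t := (log_le_log_iff hc (hxpos t ht)).1 hxt
    have : 0 ≤ a * y t / (1 + x t) :=
      div_nonneg (mul_nonneg ha (hy t ht)) (by linarith [hxpos t ht])
    have : r * (1 - x t / K) ≤ r * (1 - c / K) := by gcongr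
    linarith
  filter_upwards [hlog, eventually_ge_atTop 0] with t hxt ht
  exact (log_le_log_iff (hxpos t ht) hc).1 hxt

theorem prey_eventually_ge (hr : 0 < r) (ha : 0 ≤ a) (hK : 0 < K)
    (hx : IsPreySolution r a K x y) (hxpos : ∀ t, 0 ≤ t → 0 < x t) (hy : ∀ t, 0 ≤ t → 0 ≤ y t)
    (hy0 : Tendsto y atTop (𝓝 0)) {c : ℝ} (hcK : c < K) :
    ∀ᶠ t in atTop, c ≤ x t := by
  rcases le_or_gt c 0 with hc | hc
  · filter_upwards [eventually_ge_atTop 0] with t ht using hc.trans (hxpos t ht).le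
  set η := r * (1 - c / K) / 2 with hη_def
  have hη : 0 < η := by
    have : c / K < 1 := (div_lt_one hK).2 hcK
    positivity
  -- eventually predation costs the prey at most half of its logistic growth rate at level `c`
  obtain ⟨T, hT⟩ := eventually_atTop.1
    ((show Tendsto (fun t => a * y t) atTop (𝓝 0) by simpa using hy0.const_mul a).eventually
      (ge_mem_nhds hη))
  have hlog : ∀ᶠ t in atTop, log c ≤ log (x t) := by
    refine eventually_ge_of_pos_le_hasDerivAt (a := max T 0) hη
      (fun t ht => hasDerivAt_log_prey (hx t (le_of_max_le_right ht))
        (hxpos t (le_of_max_le_right ht))) fun t ht hxt => ?_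
    have ht0 : 0 ≤ t := le_of_max_le_right ht
    have hxc : x t ≤ c := (log_le_log_iff (hxpos t ht0) hc).1 hxt
    have : a * y t / (1 + x t) ≤ a * y t :=
      div_le_self (mul_nonneg ha (hy t ht0)) (by linarith [hxpos t ht0])
    have : r * (1 - c / K) ≤ r * (1 - x t / K) := by gcongr
    linarith [hT t (le_of_max_le_left ht), hη_def]
  filter_upwards [hlog, eventually_ge_atTop 0] with t hxt ht
  exact (log_le_log_iff hc (hxpos t ht)).1 hxt

theorem prey_tendsto (hr : 0 < r) (ha : 0 ≤ a) (hK : 0 < K)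
    (hx : IsPreySolution r a K x y) (hxpos : ∀ t, 0 ≤ t → 0 < x t) (hy : ∀ t, 0 ≤ t → 0 ≤ y t)
    (hy0 : Tendsto y atTop (𝓝 0)) : Tendsto x atTop (𝓝 K) := by
  refine tendsto_order.2 ⟨fun c hc => ?_, fun c hc => ?_⟩
  · filter_upwards [prey_eventually_ge hr ha hK hx hxpos hy hy0 (c := (c + K) / 2) (by linarith)]
      with t ht
    linarith
  · filter_upwards [prey_eventually_le hr ha hK hx hxpos hy (c := (K + c) / 2) (by linarith)]
      with t ht
    linarith

theorem exists_pos_eventually_holling_sub_le (hr : 0 < r) (ha : 0 ≤ a) (hK : 0 < K)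
    (hx : IsPreySolution r a K x y) (hxpos : ∀ t, 0 ≤ t → 0 < x t) (hy : ∀ t, 0 ≤ t → 0 ≤ y t)
    {d : ℝ} (hd : holling a K < d) :
    ∃ δ > 0, ∀ᶠ t in atTop, holling a (x t) - d ≤ -δ := by
  obtain ⟨c, hKc, hc⟩ := exists_gt_holling_lt (by positivity) hd
  refine ⟨d - holling a c, sub_pos.2 hc, ?_⟩
  filter_upwards [prey_eventually_le hr ha hK hx hxpos hy hKc, eventually_ge_atTop 0] with t hxc ht
  linarith [holling_le_holling ha (hxpos t ht).le hxc]

end Prey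

section Predator

variable {c1 c2 y1 y2 : ℝ → ℝ} {ρ1 ρ2 : ℝ}

theorem predator_nonneg {M : ℝ} (hρ1 : 0 ≤ ρ1) (hρ2 : 0 ≤ ρ2)
    (hy1 : ∀ t, 0 ≤ t → HasDerivAt y1 (c1 t * y1 t + ρ1 * (y2 t - y1 t)) t)
    (hy2 : ∀ t, 0 ≤ t → HasDerivAt y2 (c2 t * y2 t + ρ2 * (y1 t - y2 t)) t)
    (hc1 : ∀ t, 0 ≤ t → c1 t ≤ M) (hc2 : ∀ t, 0 ≤ t → c2 t ≤ M)
    (hy10 : 0 ≤ y1 0) (hy20 : 0 ≤ y2 0) (t : ℝ) (ht : 0 ≤ t) : 0 ≤ y1 t ∧ 0 ≤ y2 t := by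
  -- Grönwall for the squared negative parts, which vanish at time `0`
  have hV := le_mul_exp_of_hasDerivAt_le_mul (a := 0) (K := 2 * M + ρ1 + ρ2)
    (f := fun s => min (y1 s) 0 ^ 2 + min (y2 s) 0 ^ 2)
    (fun s hs => ((hasDerivAt_min_zero_sq _).comp s (hy1 s hs)).add
      ((hasDerivAt_min_zero_sq _).comp s (hy2 s hs)))
    (fun s hs => by
      have h1 := two_min_zero_mul_le (u := y1 s) (w := y2 s) (hc1 s hs) hρ1
      have h2 := two_min_zero_mul_le (u := y2 s) (w := y1 s) (hc2 s hs) hρ2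
      nlinarith [mul_nonneg hρ1 (sq_nonneg (min (y2 s) 0)),
        mul_nonneg hρ2 (sq_nonneg (min (y1 s) 0))]) t ht
  simp only [min_eq_right hy10, min_eq_right hy20, ne_eq, OfNat.ofNat_ne_zero,
    not_false_eq_true, zero_pow, add_zero, zero_mul] at hV
  have h1 : min (y1 t) 0 = 0 := pow_eq_zero_iff two_ne_zero |>.1 <|
    le_antisymm (by nlinarith [sq_nonneg (min (y2 t) 0)]) (sq_nonneg _)
  have h2 : min (y2 t) 0 = 0 := pow_eq_zero_iff two_ne_zero |>.1 <|
    le_antisymm (by nlinarith [sq_nonneg (min (y1 t) 0)]) (sq_nonneg _)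
  exact ⟨min_eq_right_iff.1 h1, min_eq_right_iff.1 h2⟩

theorem predator_tendsto_zero {δ1 δ2 : ℝ} (hδ1 : 0 < δ1) (hδ2 : 0 < δ2)
    (hρ1 : 0 ≤ ρ1) (hρ2 : 0 ≤ ρ2)
    (hy1 : ∀ t, 0 ≤ t → HasDerivAt y1 (c1 t * y1 t + ρ1 * (y2 t - y1 t)) t)
    (hy2 : ∀ t, 0 ≤ t → HasDerivAt y2 (c2 t * y2 t + ρ2 * (y1 t - y2 t)) t)
    (hy : ∀ t, 0 ≤ t → 0 ≤ y1 t ∧ 0 ≤ y2 t)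
    (hc1 : ∀ᶠ t in atTop, c1 t ≤ -δ1) (hc2 : ∀ᶠ t in atTop, c2 t ≤ -δ2) :
    Tendsto y1 atTop (𝓝 0) ∧ Tendsto y2 atTop (𝓝 0) := by
  set δ := min δ1 δ2
  have hδ : 0 < δ := lt_min hδ1 hδ2
  obtain ⟨T, hT⟩ := eventually_atTop.1 (hc1.and hc2)
  have hp : 0 < ρ2 + δ / 2 := by positivity
  have hq : 0 < ρ1 + δ / 2 := by positivity
  -- with these weights the dispersal terms are absorbed: the weighted total decays at rate `δ / 2`
  have hV : Tendsto (fun t => (ρ2 + δ / 2) * y1 t + (ρ1 + δ / 2) * y2 t) atTop (𝓝 0) := by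
    refine tendsto_zero_of_hasDerivAt_le_neg_mul (a := max T 0) (half_pos hδ)
      (fun t ht => ((hy1 t (le_of_max_le_right ht)).const_mul (ρ2 + δ / 2)).add
        ((hy2 t (le_of_max_le_right ht)).const_mul (ρ1 + δ / 2))) (fun t ht => ?_)
      (fun t ht => by
        obtain ⟨h1, h2⟩ := hy t (le_of_max_le_right ht)
        positivity)
    obtain ⟨h1, h2⟩ := hy t (le_of_max_le_right ht)
    obtain ⟨hc1t, hc2t⟩ := hT t (le_of_max_le_left ht)
    have hc1δ : c1 t ≤ -δ := hc1t.trans (neg_le_neg (min_le_left _ _))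
    have hc2δ : c2 t ≤ -δ := hc2t.trans (neg_le_neg (min_le_right _ _))
    nlinarith [mul_nonneg (sub_nonneg.2 hc1δ) (mul_nonneg hp.le h1),
      mul_nonneg (sub_nonneg.2 hc2δ) (mul_nonneg hq.le h2),
      mul_nonneg (mul_nonneg hδ.le hρ1) h1, mul_nonneg (mul_nonneg hδ.le hρ2) h2,
      mul_nonneg (sq_nonneg δ) h1, mul_nonneg (sq_nonneg δ) h2]
  refine ⟨tendsto_of_tendsto_of_tendsto_of_le_of_le' tendsto_const_nhds
      (by simpa using hV.div_const (ρ2 + δ / 2)) ?_ ?_,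
    tendsto_of_tendsto_of_tendsto_of_le_of_le' tendsto_const_nhds
      (by simpa using hV.div_const (ρ1 + δ / 2)) ?_ ?_⟩
  all_goals filter_upwards [eventually_ge_atTop 0] with t ht
  all_goals obtain ⟨h1, h2⟩ := hy t ht
  · exact h1
  · rw [le_div_iff₀ hp]; nlinarith
  · exact h2
  · rw [le_div_iff₀ hq]; nlinarith

end Predator

theorem model2_global_stability_predator_free_general
    (r a1 a2 K1 K2 d1 d2 ρ1 ρ2 : ℝ)
    (hr : 0 < r) (ha1 : 0 < a1) (ha2 : 0 < a2) (hK1 : 0 < K1) (hK2 : 0 < K2)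
    (hρ1 : 0 ≤ ρ1) (hρ2 : 0 ≤ ρ2)
    (hμ1 : a1 * K1 / (1 + K1) < d1) (hμ2 : a2 * K2 / (1 + K2) < d2)
    (x1 y1 x2 y2 : ℝ → ℝ)
    (hx1 : ∀ t : ℝ, 0 ≤ t → HasDerivAt x1
      (x1 t * (1 - x1 t / K1) - a1 * x1 t * y1 t / (1 + x1 t)) t)
    (hy1 : ∀ t : ℝ, 0 ≤ t → HasDerivAt y1
      (a1 * x1 t * y1 t / (1 + x1 t) - d1 * y1 t + ρ1 * (y2 t - y1 t)) t)
    (hx2 : ∀ t : ℝ, 0 ≤ t → HasDerivAt x2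
      (r * x2 t * (1 - x2 t / K2) - a2 * x2 t * y2 t / (1 + x2 t)) t)
    (hy2 : ∀ t : ℝ, 0 ≤ t → HasDerivAt y2
      (a2 * x2 t * y2 t / (1 + x2 t) - d2 * y2 t + ρ2 * (y1 t - y2 t)) t)
    (hx10 : 0 < x1 0) (hy10 : 0 ≤ y1 0) (hx20 : 0 < x2 0) (hy20 : 0 ≤ y2 0) :
    Tendsto y1 atTop (nhds 0) ∧ Tendsto y2 atTop (nhds 0) ∧
      Tendsto x1 atTop (nhds K1) ∧ Tendsto x2 atTop (nhds K2) := by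
  have hx1' : IsPreySolution 1 a1 K1 x1 y1 := by simpa only [IsPreySolution, one_mul] using hx1
  have hx1pos := prey_pos zero_le_one ha1.le hK1 hx1' (fun t ht => (hy1 t ht).continuousAt) hx10
  have hx2pos := prey_pos hr.le ha2.le hK2 hx2 (fun t ht => (hy2 t ht).continuousAt) hx20
  have hy1' : ∀ t, 0 ≤ t → HasDerivAt y1
      ((holling a1 (x1 t) - d1) * y1 t + ρ1 * (y2 t - y1 t)) t :=
    fun t ht => (hy1 t ht).congr_deriv (by unfold holling; ring)
  have hy2' : ∀ t, 0 ≤ t → HasDerivAt y2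
      ((holling a2 (x2 t) - d2) * y2 t + ρ2 * (y1 t - y2 t)) t :=
    fun t ht => (hy2 t ht).congr_deriv (by unfold holling; ring)
  have hy := predator_nonneg (M := max (a1 - d1) (a2 - d2)) hρ1 hρ2 hy1' hy2'
    (fun t ht => (sub_le_sub_right (holling_le ha1.le (hx1pos t ht).le) _).trans (le_max_left _ _))
    (fun t ht => (sub_le_sub_right (holling_le ha2.le (hx2pos t ht).le) _).trans (le_max_right _ _))
    hy10 hy20
  obtain ⟨δ1, hδ1, hc1⟩ := exists_pos_eventually_holling_sub_le one_pos ha1.le hK1 hx1' hx1pos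
    (fun t ht => (hy t ht).1) hμ1
  obtain ⟨δ2, hδ2, hc2⟩ := exists_pos_eventually_holling_sub_le hr ha2.le hK2 hx2 hx2pos
    (fun t ht => (hy t ht).2) hμ2
  obtain ⟨hy1lim, hy2lim⟩ := predator_tendsto_zero hδ1 hδ2 hρ1 hρ2 hy1' hy2' hy hc1 hc2
  exact ⟨hy1lim, hy2lim,
    prey_tendsto one_pos ha1.le hK1 hx1' hx1pos (fun t ht => (hy t ht).1) hy1lim,
    prey_tendsto hr ha2.le hK2 hx2 hx2pos (fun t ht => (hy t ht).2) hy2lim⟩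

/-- **Predator extinction and global stability of `(K₁, 0, K₂, 0)` for the
classical two-patch model (2).**  If `aᵢKᵢ/(1+Kᵢ) < dᵢ` for `i = 1, 2`
(equivalently `μᵢ > Kᵢ`), then every solution of Model (2) with
`x₁(0) > 0`, `x₂(0) > 0`, `y₁(0) ≥ 0`, `y₂(0) ≥ 0` converges to
`(K₁, 0, K₂, 0)` as `t → ∞`. -/
theorem model2_global_stability_predator_free
    (r a1 a2 K1 K2 d1 d2 ρ1 ρ2 : ℝ)
    (hr : 0 < r) (ha1 : 0 < a1) (ha2 : 0 < a2) (hK1 : 0 < K1) (hK2 : 0 < K2)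
    (hd1 : 0 < d1) (hd2 : 0 < d2) (hρ1 : 0 ≤ ρ1) (hρ2 : 0 ≤ ρ2)
    (hμ1 : a1 * K1 / (1 + K1) < d1) (hμ2 : a2 * K2 / (1 + K2) < d2)
    (x1 y1 x2 y2 : ℝ → ℝ)
    (hx1 : ∀ t : ℝ, 0 ≤ t → HasDerivAt x1
      (x1 t * (1 - x1 t / K1) - a1 * x1 t * y1 t / (1 + x1 t)) t)
    (hy1 : ∀ t : ℝ, 0 ≤ t → HasDerivAt y1
      (a1 * x1 t * y1 t / (1 + x1 t) - d1 * y1 t + ρ1 * (y2 t - y1 t)) t)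
    (hx2 : ∀ t : ℝ, 0 ≤ t → HasDerivAt x2
      (r * x2 t * (1 - x2 t / K2) - a2 * x2 t * y2 t / (1 + x2 t)) t)
    (hy2 : ∀ t : ℝ, 0 ≤ t → HasDerivAt y2
      (a2 * x2 t * y2 t / (1 + x2 t) - d2 * y2 t + ρ2 * (y1 t - y2 t)) t)
    (hx10 : 0 < x1 0) (hy10 : 0 ≤ y1 0) (hx20 : 0 < x2 0) (hy20 : 0 ≤ y2 0) :
    Tendsto y1 atTop (nhds 0) ∧ Tendsto y2 atTop (nhds 0) ∧
      Tendsto x1 atTop (nhds K1) ∧ Tendsto x2 atTop (nhds K2) :=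
  model2_global_stability_predator_free_general r a1 a2 K1 K2 d1 d2 ρ1 ρ2 hr ha1 ha2 hK1 hK2 hρ1 hρ2
    hμ1 hμ2 x1 y1 x2 y2 hx1 hy1 hx2 hy2 hx10 hy10 hx20 hy20
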